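/- Correctness of lazy composition: for all p : P_B C, q : P_A B, and α : A^ω, eat∞ (p ⊗ q) α = eat∞ p (eat∞ q α); hence eat∞ (p ⊗ q) = eat∞ p ∘ eat∞ q. -/

import Mathlib

universe u

/-- The initial algebra `T_A B = μX. B + X^A`: wellfounded trees branching over `A`
with leaves labelled in `B`. -/
inductive T (A : Type u) (B : Type u) : Type u
  | Ret : B → T A B
  | Rd : (A → T A B) → T A B

namespace StreamProc

/-- `eat (Ret b) α = (b, α)`, `eat (Rd φ) (a ∷ α) = eat (φ a) α`. -/
def eat {A B : Type u} : T A B → Stream' A → B × Stream' A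
  | .Ret b, α => (b, α)
  | .Rd φ, α => eat (φ α.head) α.tail

/-- `β` and `α` agree on their first `n` entries. -/
def Agree {A : Type u} (n : ℕ) (α β : Stream' A) : Prop :=
  ∀ i < n, α.get i = β.get i

/-- continuity of a discrete-valued function on streams (product topology of
the discrete topology, expressed concretely via prefixes). -/
def ContD {A B : Type u} (f : Stream' A → B) : Prop :=
  ∀ α, ∃ n, ∀ β, Agree n α β → f β = f α

/-- continuity of a stream-valued function on streams. -/
def ContS {A B : Type u} (f : Stream' A → Stream' B) : Prop :=
  ∀ α n, ∃ m, ∀ β, Agree m α β → Agree n (f α) (f β)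

/-- structural recursion (fold) on `T A B`. -/
def tfold {A B C : Type u} (r : B → C) (g : (A → C) → C) : T A B → C
  | .Ret b => r b
  | .Rd φ => g fun a => tfold r g (φ a)

/-- bind of the free (tree) monad `T_A`: grafting at leaves. -/
def tbind {A B C : Type u} : T A B → (B → T A C) → T A C
  | .Ret b, f => f b
  | .Rd φ, f => .Rd fun a => tbind (φ a) f

/-- bind of the state monad `M_A B = A^ω → B × A^ω`. -/
def mbind {A B C : Type u} (m : Stream' A → B × Stream' A)
    (f : B → Stream' A → C × Stream' A) : Stream' A → C × Stream' A :=
  fun α => f (m α).1 (m α).2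

/-- the type of leaf positions of a tree. -/
def LeafPos {A B : Type u} : T A B → Type u
  | .Ret _ => PUnit
  | .Rd φ => Σ a, LeafPos (φ a)

/-- the polynomial functor whose extension is `X ↦ T A (B × X)`. -/
def PF (A B : Type u) : PFunctor.{u} := ⟨T A B, LeafPos⟩

/-- `P_A B = νX. T_A (B × X)`, realised as an M-type. -/
def P (A B : Type u) : Type u := (PF A B).M

/-- repack a shape and leaf-labelling as a tree with decorated leaves. -/
def decorate {A B X : Type u} : (t : T A B) → (LeafPos t → X) → T A (B × X)
  | .Ret b, f => .Ret (b, f PUnit.unit)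
  | .Rd φ, f => .Rd fun a => decorate (φ a) fun l => f ⟨a, l⟩

/-- split a leaf-decorated tree into a shape and a leaf-labelling. -/
def splitT {A B X : Type u} : T A (B × X) → Σ t : T A B, LeafPos t → X
  | .Ret bx => ⟨.Ret bx.1, fun _ => bx.2⟩
  | .Rd φ => ⟨.Rd fun a => (splitT (φ a)).1, fun l => (splitT (φ l.1)).2 l.2⟩

/-- the structure map `out : P_A B → T_A (B × P_A B)` of the final coalgebra. -/
def Pout {A B : Type u} (p : P A B) : T A (B × P A B) :=
  decorate (PFunctor.M.dest p).1 (PFunctor.M.dest p).2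

/-- corecursion (unfold) into the final coalgebra `P_A B`. -/
def Punfold {A B X : Type u} (c : X → T A (B × X)) : X → P A B :=
  PFunctor.M.corec fun x => splitT (c x)

/-- `eat∞ : P_A B → A^ω → B^ω`: if `eat (out p) α = ((b, p'), α')` then
`eat∞ p α = b ∷ eat∞ p' α'`. -/
def eatInf {A B : Type u} (p : P A B) (α : Stream' A) : Stream' B :=
  Stream'.corec (fun s : P A B × Stream' A => (eat (Pout s.1) s.2).1.1)
    (fun s => ((eat (Pout s.1) s.2).1.2, (eat (Pout s.1) s.2).2)) (p, α)

/-- the `fast-forward` map `ρ`. -/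
def rho {A B C : Type u} : T A B → (Stream' A → C) → T A (B × (Stream' A → C))
  | .Ret b, f => .Ret (b, f)
  | .Rd φ, f => .Rd fun a => rho (φ a) fun α => f (Stream'.cons a α)

/-- `rep∞ = unfold (ρ ∘ τ)` where `τ f = (rep (head ∘ f), tail ∘ f)`. -/
def repInf {A B : Type u} (rep : (Stream' A → B) → T A B) :
    (Stream' A → Stream' B) → P A B :=
  Punfold fun f => rho (rep fun α => (f α).head) fun α => (f α).tail

/-- the carrier of the composition coalgebras. -/
def S' (A B C : Type u) : Type u := T B (C × P B C) × T A (B × P A B)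

/-- the `lazy' composition coalgebra `χ`, as a nested structural recursion
(outer fold on the postponent, inner fold on the preponent). -/
def chi {A B C : Type u} : T B (C × P B C) → T A (B × P A B) → T A (C × S' A B C) :=
  tfold
    (fun cp u => .Ret (cp.1, (Pout cp.2, u)))
    (fun f => tfold (fun bq => f bq.1 (Pout bq.2)) .Rd)

/-- the `greedy' composition coalgebra `χ'`. -/
def chi' {A B C : Type u} : T B (C × P B C) → T A (B × P A B) → T A (C × S' A B C) :=
  tfold
    (fun cp => tfold (fun bq => .Ret (cp.1, (Pout cp.2, .Ret bq))) .Rd)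
    (fun f => tfold (fun bq => f bq.1 (Pout bq.2)) .Rd)

/-- lazy composition on representatives (tree level). -/
def otimesT {A B C : Type u} (t : T B (C × P B C)) (u : T A (B × P A B)) : P A C :=
  Punfold (fun s : S' A B C => chi s.1 s.2) (t, u)

/-- lazy composition `⊗ : P_B C × P_A B → P_A C`. -/
def otimes {A B C : Type u} (p : P B C) (q : P A B) : P A C :=
  otimesT (Pout p) (Pout q)

/-- greedy composition on representatives (tree level). -/
def otimesT' {A B C : Type u} (t : T B (C × P B C)) (u : T A (B × P A B)) : P A C :=
  Punfold (fun s : S' A B C => chi' s.1 s.2) (t, u)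

/-- greedy composition `⊗' : P_B C × P_A B → P_A C`. -/
def otimes' {A B C : Type u} (p : P B C) (q : P A B) : P A C :=
  otimesT' (Pout p) (Pout q)

end StreamProc

/-!
One step of the lazy coalgebra `χ` on a state `(t, u)` reads exactly the input that `u` needs
to produce the prefix of its output consumed by `t`: it emits the value `t` emits, continues
with the residual process of `t`, and leaves a preponent state whose semantics is the rest of
the output of `u`. Hence `eat∞ (t ⊗ u) α` and `eat∞ t (eat∞ u α)` agree on their heads and
their tails are again of this form, so they are equal by bisimulation.
-/

namespace StreamProc

variable {A B C : Type u}

def eatInfT (t : T A (B × P A B)) (α : Stream' A) : Stream' B :=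
  Stream'.cons (eat t α).1.1 (eatInf (eat t α).1.2 (eat t α).2)

theorem eatInf_eq_eatInfT (p : P A B) (α : Stream' A) :
    eatInf p α = eatInfT (Pout p) α :=
  Stream'.corec_eq _ _ _

theorem eatInfT_Ret (bp : B × P A B) (α : Stream' A) :
    eatInfT (.Ret bp) α = Stream'.cons bp.1 (eatInfT (Pout bp.2) α) := by
  rw [← eatInf_eq_eatInfT]
  rfl

theorem eatInfT_Rd (φ : A → T A (B × P A B)) (α : Stream' A) :
    eatInfT (.Rd φ) α = eatInfT (φ α.head) α.tail :=
  rfl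

theorem eat_Rd_cons {X : Type u} (φ : A → T A X) (a : A) (α : Stream' A) :
    eat (.Rd φ) (Stream'.cons a α) = eat (φ a) α :=
  rfl

theorem eat_decorate_splitT {X Y : Type u} (g : X → Y) :
    ∀ (t : T A (B × X)) (α : Stream' A),
      eat (decorate (splitT t).1 (g ∘ (splitT t).2)) α =
        (((eat t α).1.1, g (eat t α).1.2), (eat t α).2)
  | .Ret _, _ => rfl
  | .Rd φ, α => eat_decorate_splitT g (φ α.head) α.tail

theorem Pout_Punfold {X : Type u} (c : X → T A (B × X)) (x : X) :
    Pout (Punfold c x) = decorate (splitT (c x)).1 (Punfold c ∘ (splitT (c x)).2) := by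
  unfold Pout Punfold
  rw [PFunctor.M.dest_corec (P := PF A B) (fun x => splitT (c x)) x]
  rfl

theorem eatInf_Punfold {X : Type u} (c : X → T A (B × X)) (x : X) (α : Stream' A) :
    eatInf (Punfold c x) α =
      Stream'.cons (eat (c x) α).1.1 (eatInf (Punfold c (eat (c x) α).1.2) (eat (c x) α).2) := by
  rw [eatInf_eq_eatInfT, eatInfT, Pout_Punfold, eat_decorate_splitT]

theorem exists_eat_chi (t : T B (C × P B C)) (u : T A (B × P A B)) (α : Stream' A) :
    ∃ u' α', eatInfT u' α' = (eat t (eatInfT u α)).2 ∧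
      eat (chi t u) α =
        (((eat t (eatInfT u α)).1.1, (Pout (eat t (eatInfT u α)).1.2, u')), α') := by
  induction t generalizing u α with
  | Ret _ => exact ⟨u, α, rfl, rfl⟩
  | Rd φ ih_t =>
    induction u generalizing α with
    | Ret bq =>
      rw [eatInfT_Ret, eat_Rd_cons]
      exact ih_t bq.1 (Pout bq.2) α
    | Rd ψ ih_u =>
      rw [eatInfT_Rd]
      exact ih_u α.head α.tail

theorem eatInf_otimesT (t : T B (C × P B C)) (u : T A (B × P A B)) (α : Stream' A) :
    eatInf (otimesT t u) α = eatInfT t (eatInfT u α) := by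
  refine Stream'.eq_of_bisim
    (fun x y => ∃ t u α, x = eatInf (otimesT t u) α ∧ y = eatInfT t (eatInfT u α))
    ?_ ⟨t, u, α, rfl, rfl⟩
  rintro _ _ ⟨t, u, α, rfl, rfl⟩
  obtain ⟨u', α', h_rest, h_chi⟩ := exists_eat_chi t u α
  have h_lhs : eatInf (otimesT t u) α = Stream'.cons (eat t (eatInfT u α)).1.1
      (eatInf (otimesT (Pout (eat t (eatInfT u α)).1.2) u') α') := by
    have h := eatInf_Punfold (fun s : S' A B C => chi s.1 s.2) (t, u) α
    rw [otimesT, h, h_chi]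
    rfl
  have h_rhs : eatInfT t (eatInfT u α) = Stream'.cons (eat t (eatInfT u α)).1.1
      (eatInfT (Pout (eat t (eatInfT u α)).1.2) (eatInfT u' α')) := by
    rw [eatInfT, ← h_rest, eatInf_eq_eatInfT]
  rw [h_lhs, h_rhs, Stream'.head_cons, Stream'.tail_cons, Stream'.tail_cons]
  exact ⟨rfl, _, u', α', rfl, rfl⟩

/-- Correctness of lazy composition: `eat∞ (p ⊗ q) = eat∞ p ∘ eat∞ q`. -/
theorem stmt17 {A B C : Type u} (p : P B C) (q : P A B) :
    (∀ α, eatInf (otimes p q) α = eatInf p (eatInf q α)) ∧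
    eatInf (otimes p q) = eatInf p ∘ eatInf q := by
  have h : ∀ α, eatInf (otimes p q) α = eatInf p (eatInf q α) := fun α => by
    rw [otimes, eatInf_otimesT, eatInf_eq_eatInfT q, eatInf_eq_eatInfT p]
  exact ⟨h, funext h⟩

end StreamProc
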